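/- Let α ∈ ℝ. Then for all x ∈ (0, 1), the series ∑_{k=3}^∞ b_k(α) x^k converges and 1 + (1+x)^α − (1−x)^{(1−α)/2} − (1+x)^{(1+α)/2} = ((α−1)²/4) x² + ∑_{k=3}^∞ b_k(α) x^k. -/

import Mathlib

/-!
Each of the three powers is the sum of its binomial series on `|x| < 1`, so
`g(x) - 1` is the power series with coefficients `b_k(α)`. Its first three coefficients are
`b_0 = -1`, `b_1 = 0` (this is what the choice `β = (1 - α) / 2` achieves) and
`b_2 = (α - 1)² / 4`.
-/

/-- The generalized binomial coefficient `binom(γ, k) = γ(γ−1)⋯(γ−k+1)/k!`. -/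
noncomputable def genBinom (γ : ℝ) (k : ℕ) : ℝ :=
  (∏ i ∈ Finset.range k, (γ - i)) / (Nat.factorial k)

/-- `b_k(α) = binom(α,k) − (−1)^k binom((1−α)/2, k) − binom((1+α)/2, k)`. -/
noncomputable def bCoef (α : ℝ) (k : ℕ) : ℝ :=
  genBinom α k - (-1) ^ k * genBinom ((1 - α) / 2) k - genBinom ((1 + α) / 2) k

theorem genBinom_eq_choose (γ : ℝ) (k : ℕ) : genBinom γ k = Ring.choose γ k := by
  rw [Ring.choose_eq_smul, ← Polynomial.aeval_eq_smeval, Polynomial.aeval_def,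
    ← Polynomial.eval_map, descPochhammer_map, descPochhammer_eval_eq_prod_range, genBinom,
    smul_eq_mul, inv_mul_eq_div]

theorem hasSum_genBinom_mul_pow (γ : ℝ) {y : ℝ} (hy : |y| < 1) :
    HasSum (fun k ↦ genBinom γ k * y ^ k) ((1 + y) ^ γ) := by
  have hy_ball : y ∈ Metric.eball 0 1 := by
    rw [Metric.mem_eball, edist_zero_right, ← ofReal_norm, ENNReal.ofReal_lt_one]
    exact hy
  simpa [binomialSeries, FormalMultilinearSeries.ofScalars_apply_eq, genBinom_eq_choose,
    mul_comm] using Real.one_add_rpow_hasFPowerSeriesOnBall_zero.hasSum hy_ball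

theorem hasSum_bCoef_mul_pow (α : ℝ) {x : ℝ} (hx : |x| < 1) :
    HasSum (fun k ↦ bCoef α k * x ^ k)
      ((1 + x) ^ α - (1 - x) ^ ((1 - α) / 2) - (1 + x) ^ ((1 + α) / 2)) := by
  have hneg := hasSum_genBinom_mul_pow ((1 - α) / 2) (y := -x) (by rwa [abs_neg])
  rw [← sub_eq_add_neg] at hneg
  have hcoef : (fun k ↦ bCoef α k * x ^ k) = fun k ↦ genBinom α k * x ^ k -
      genBinom ((1 - α) / 2) k * (-x) ^ k - genBinom ((1 + α) / 2) k * x ^ k := by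
    funext k
    rw [bCoef, neg_pow]
    ring
  rw [hcoef]
  exact ((hasSum_genBinom_mul_pow α hx).sub hneg).sub (hasSum_genBinom_mul_pow _ hx)

theorem sum_range_three_bCoef_mul_pow (α x : ℝ) :
    ∑ k ∈ Finset.range 3, bCoef α k * x ^ k = -1 + (α - 1) ^ 2 / 4 * x ^ 2 := by
  simp only [bCoef, genBinom, Finset.sum_range_succ, Finset.prod_range_succ, Finset.sum_range_zero,
    Finset.prod_range_zero, Nat.factorial]
  push_cast
  ring

/-- Identity (4.3): Taylor expansion of
`g(x) = 1 + (1+x)^α − (1−x)^{(1−α)/2} − (1+x)^{(1+α)/2}`. -/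
theorem g_taylor_expansion (α : ℝ) (x : ℝ) (hx : x ∈ Set.Ioo (0 : ℝ) 1) :
    Summable (fun k : ℕ => bCoef α (k + 3) * x ^ (k + 3)) ∧
    1 + (1 + x) ^ α - (1 - x) ^ ((1 - α) / 2) - (1 + x) ^ ((1 + α) / 2) =
      (α - 1) ^ 2 / 4 * x ^ 2 + ∑' k : ℕ, bCoef α (k + 3) * x ^ (k + 3) := by
  have hg := hasSum_bCoef_mul_pow α (abs_lt.mpr ⟨by linarith [hx.1], hx.2⟩)
  have htail := (summable_nat_add_iff 3).mpr hg.summable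
  refine ⟨htail, ?_⟩
  have hsplit := hg.summable.sum_add_tsum_nat_add 3
  rw [hg.tsum_eq, sum_range_three_bCoef_mul_pow] at hsplit
  linarith
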